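/- Let $X$ be a Banach space and $1 \le p < t < r < \infty$. Then the set $L_c^\infty(X)$ of compactly supported, bounded, $X$-valued measurable functions is dense in the Bourgain-Morrey space $M_p^{t,r}(X)$. -/

import Mathlib

open MeasureTheory Filter ENNReal

noncomputable section

/-- The dyadic cube `Q_{j,m} = ∏ᵢ [2^{-j} mᵢ, 2^{-j}(mᵢ+1))` in `ℝⁿ`. -/
def dyadicCube (n : ℕ) (j : ℤ) (m : Fin n → ℤ) : Set (Fin n → ℝ) :=
  {x | ∀ i, (2:ℝ) ^ (-(j:ℝ)) * m i ≤ x i ∧ x i < (2:ℝ) ^ (-(j:ℝ)) * (m i + 1)}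

/-- The volume `2^{-jn}` of a dyadic cube of generation `j`, as an extended nonnegative real. -/
def cubeVol (n : ℕ) (j : ℤ) : ℝ≥0∞ := (2:ℝ≥0∞) ^ (-((j:ℝ) * n))

/-- The `ℓ^r` norm of an `ℝ≥0∞`-valued family, `r ∈ (0,∞]`. -/
def lrNorm {ι : Type*} (r : ℝ≥0∞) (a : ι → ℝ≥0∞) : ℝ≥0∞ :=
  if r = ∞ then ⨆ i, a i else (∑' i, a i ^ r.toReal) ^ (1 / r.toReal)

/-- The Bourgain–Morrey norm of an `X`-valued function on `ℝⁿ`. -/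
def BMnorm (n : ℕ) (p t : ℝ) (r : ℝ≥0∞) {X : Type*} [NormedAddCommGroup X]
    (f : (Fin n → ℝ) → X) : ℝ≥0∞ :=
  lrNorm r fun jm : ℤ × (Fin n → ℤ) =>
    cubeVol n jm.1 ^ (1/t - 1/p) *
      (∫⁻ x in dyadicCube n jm.1 jm.2, (‖f x‖₊ : ℝ≥0∞) ^ p) ^ (1/p)

/-- Membership in the Bourgain–Morrey space `M_p^{t,r}(X)`. -/
def MemBM (n : ℕ) (p t : ℝ) (r : ℝ≥0∞) {X : Type*} [NormedAddCommGroup X]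
    (f : (Fin n → ℝ) → X) : Prop :=
  AEStronglyMeasurable f volume ∧ BMnorm n p t r f < ∞

/-- The conjugate exponent `a' = a/(a-1)`. -/
def conj (a : ℝ) : ℝ := a / (a - 1)

/-- The conjugate exponent of `r ∈ (1,∞]`, with `∞' = 1`. -/
def conjE (r : ℝ≥0∞) : ℝ := if r = ∞ then 1 else conj r.toReal

/-- A `(p',t',Y)`-block supported on the dyadic cube `Q_{j,k}`. -/
def IsBlock (n : ℕ) (p t : ℝ) (j : ℤ) (k : Fin n → ℤ) {Y : Type*} [NormedAddCommGroup Y]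
    (b : (Fin n → ℝ) → Y) : Prop :=
  AEStronglyMeasurable b volume ∧ (∀ x, x ∉ dyadicCube n j k → b x = 0) ∧
    (∫⁻ x, (‖b x‖₊ : ℝ≥0∞) ^ conj p) ^ (1 / conj p) ≤ cubeVol n j ^ (1/t - 1/p)

/-- A representation of `f` as an a.e. convergent sum of blocks with coefficients `lam`. -/
def IsBlockRep (n : ℕ) (p t : ℝ) {Y : Type*} [NormedAddCommGroup Y] [NormedSpace ℝ Y]
    (f : (Fin n → ℝ) → Y) (lam : ℤ × (Fin n → ℤ) → ℝ)
    (b : ℤ × (Fin n → ℤ) → (Fin n → ℝ) → Y) : Prop :=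
  (∀ jk : ℤ × (Fin n → ℤ), IsBlock n p t jk.1 jk.2 (b jk)) ∧
    ∀ᵐ x : Fin n → ℝ ∂volume, HasSum (fun jk => lam jk • b jk x) (f x)

/-- The norm of the block space `𝓗_{p'}^{t',r'}(Y)` (parametrized by `p`, `t` and `r'`). -/
def blockNorm (n : ℕ) (p t r' : ℝ) {Y : Type*} [NormedAddCommGroup Y] [NormedSpace ℝ Y]
    (f : (Fin n → ℝ) → Y) : ℝ≥0∞ :=
  ⨅ (lam : ℤ × (Fin n → ℤ) → ℝ) (b : ℤ × (Fin n → ℤ) → (Fin n → ℝ) → Y)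
    (_ : IsBlockRep n p t f lam b),
    (∑' jk : ℤ × (Fin n → ℤ), ENNReal.ofReal |lam jk| ^ r') ^ (1 / r')

/-- Membership in the block space `𝓗_{p'}^{t',r'}(Y)`. -/
def MemBlock (n : ℕ) (p t r' : ℝ) {Y : Type*} [NormedAddCommGroup Y] [NormedSpace ℝ Y]
    (f : (Fin n → ℝ) → Y) : Prop := blockNorm n p t r' f < ∞

/-- The dyadic averaging operator `E_k` at generation `k`. -/
def Ek (n : ℕ) {X : Type*} [NormedAddCommGroup X] [NormedSpace ℝ X]
    (k : ℤ) (f : (Fin n → ℝ) → X) (x : Fin n → ℝ) : X :=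
  ((2:ℝ) ^ ((k:ℝ) * n)) • ∫ y in dyadicCube n k fun i => ⌊(2:ℝ) ^ (k:ℝ) * x i⌋, f y

/-!
The ℓ^r sum defining the Bourgain–Morrey norm of `f` converges, so the cubes outside a finite set
`S` contribute arbitrarily little. On each of the finitely many cubes in `S`, `f` is in `L^p`, and
by dominated convergence the `L^p` norm of `f` on `{‖f‖ > M}` tends to `0` as `M → ∞`. Hence
`g = f · 1_{(⋃ S) ∩ {‖f‖ ≤ M}}` works: `‖f - g‖ ≤ ‖f‖` on every cube, and `f - g` is small on
the cubes of `S`.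
-/

open Topology

theorem ENNReal.exists_tsum_lt_of_le_of_tendsto_zero {ι β : Type*} {l : Filter β} [l.NeBot]
    {F : ι → ℝ≥0∞} (hF : ∑' i, F i ≠ ∞) (e : Finset ι → β → ι → ℝ≥0∞)
    (he_le : ∀ S b i, e S b i ≤ F i)
    (he_lim : ∀ S, ∀ i ∈ S, Tendsto (fun b => e S b i) l (𝓝 0))
    {δ : ℝ≥0∞} (hδ : 0 < δ) : ∃ S b, ∑' i, e S b i < δ := by
  have hδ2 : 0 < δ / 2 := ENNReal.half_pos hδ.ne'
  obtain ⟨S, hS⟩ : ∃ S : Finset ι, ∑' i : {i // i ∉ S}, F i < δ / 2 :=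
    ((ENNReal.tendsto_tsum_compl_atTop_zero hF).eventually (gt_mem_nhds hδ2)).exists
  have hsum : Tendsto (fun b => ∑ i ∈ S, e S b i) l (𝓝 0) := by
    simpa using tendsto_finsetSum S (he_lim S)
  obtain ⟨b, hb⟩ := (hsum.eventually (gt_mem_nhds hδ2)).exists
  refine ⟨S, b, ?_⟩
  calc ∑' i, e S b i = ∑ i ∈ S, e S b i + ∑' i : {i // i ∉ S}, e S b i :=
        (ENNReal.sum_add_tsum_compl S _).symm
    _ < δ / 2 + δ / 2 := ENNReal.add_lt_add hb
        ((ENNReal.tsum_le_tsum fun i : {i // i ∉ S} => he_le S b i).trans_lt hS)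
    _ = δ := ENNReal.add_halves δ

theorem ENNReal.Tendsto.const_mul_rpow_zero {β : Type*} {l : Filter β} {u : β → ℝ≥0∞}
    (hu : Tendsto u l (𝓝 0)) {c : ℝ≥0∞} (hc : c ≠ ∞) {r : ℝ} (hr : 0 < r) :
    Tendsto (fun b => (c * u b) ^ r) l (𝓝 0) := by
  have hmul := ENNReal.Tendsto.const_mul hu (Or.inr hc)
  rw [mul_zero] at hmul
  have h := ((ENNReal.continuous_rpow_const (y := r)).tendsto 0).comp hmul
  rwa [ENNReal.zero_rpow_of_pos hr] at h

theorem tendsto_eLpNorm'_indicator_lt_norm {α E : Type*} [MeasurableSpace α] {μ : Measure α}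
    [NormedAddCommGroup E] {f : α → E} {q : ℝ} (hf : AEStronglyMeasurable f μ) (hq : 0 < q)
    (hfq : eLpNorm' f q μ ≠ ∞) :
    Tendsto (fun M : ℕ => eLpNorm' ({x | (M : ℝ) < ‖f x‖}.indicator f) q μ) atTop (𝓝 0) := by
  have hint : ∫⁻ x, ‖f x‖ₑ ^ q ∂μ ≠ ∞ := by
    rw [eLpNorm'] at hfq
    exact ((ENNReal.rpow_lt_top_iff_of_pos (one_div_pos.2 hq)).1 hfq.lt_top).ne
  have hlim : Tendsto (fun M : ℕ => ∫⁻ x, ‖{x | (M : ℝ) < ‖f x‖}.indicator f x‖ₑ ^ q ∂μ)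
      atTop (𝓝 0) := by
    rw [← lintegral_zero]
    have hmeas (M : ℕ) := hf.indicator₀ (s := {x | (M : ℝ) < ‖f x‖})
      (nullMeasurableSet_lt aemeasurable_const hf.norm.aemeasurable)
    refine tendsto_lintegral_of_dominated_convergence' _ (fun M => (hmeas M).enorm.pow_const q)
      (fun M => ?_) hint (ae_of_all _ fun x => ?_)
    · refine ae_of_all _ fun x => ENNReal.rpow_le_rpow ?_ hq.le
      exact enorm_indicator_le_enorm_self f x
    · refine tendsto_const_nhds.congr' ?_
      filter_upwards [eventually_ge_atTop ⌈‖f x‖⌉₊] with M hM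
      have hle : ‖f x‖ ≤ M := (Nat.le_ceil _).trans (by exact_mod_cast hM)
      rw [Set.indicator_of_notMem (s := {x | (M : ℝ) < ‖f x‖}) (not_lt.2 hle), enorm_zero,
        ENNReal.zero_rpow_of_pos hq]
  have h := ((ENNReal.continuous_rpow_const (y := 1 / q)).tendsto 0).comp hlim
  rwa [ENNReal.zero_rpow_of_pos (one_div_pos.2 hq)] at h

section Dyadic

variable {n : ℕ} {p t r : ℝ} {X : Type*} [NormedAddCommGroup X]

theorem measurableSet_dyadicCube (j : ℤ) (m : Fin n → ℤ) : MeasurableSet (dyadicCube n j m) := by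
  have hpi : dyadicCube n j m = Set.univ.pi fun i =>
      Set.Ico ((2:ℝ) ^ (-(j:ℝ)) * m i) ((2:ℝ) ^ (-(j:ℝ)) * (m i + 1)) := by
    ext x
    simp [dyadicCube]
  rw [hpi]
  exact MeasurableSet.univ_pi fun _ => measurableSet_Ico

theorem dyadicCube_subset_Icc (j : ℤ) (m : Fin n → ℤ) :
    dyadicCube n j m ⊆
      Set.Icc (fun i => (2:ℝ) ^ (-(j:ℝ)) * m i) (fun i => (2:ℝ) ^ (-(j:ℝ)) * (m i + 1)) :=
  fun _ hx => ⟨fun i => (hx i).1, fun i => (hx i).2.le⟩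

theorem cubeVol_ne_zero (j : ℤ) : cubeVol n j ≠ 0 := by
  simp [cubeVol, ENNReal.rpow_eq_zero_iff]

theorem cubeVol_ne_top (j : ℤ) : cubeVol n j ≠ ∞ := by
  simp [cubeVol, ENNReal.rpow_eq_top_iff]

theorem cubeVol_rpow_ne_top (j : ℤ) (θ : ℝ) : cubeVol n j ^ θ ≠ ∞ :=
  ENNReal.rpow_ne_top_of_ne_zero (cubeVol_ne_zero j) (cubeVol_ne_top j)

theorem BMnorm_ofReal_eq (hr : 0 ≤ r) (f : (Fin n → ℝ) → X) :
    BMnorm n p t (ENNReal.ofReal r) f = (∑' jm : ℤ × (Fin n → ℤ), (cubeVol n jm.1 ^ (1/t - 1/p) *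
      eLpNorm' f p (volume.restrict (dyadicCube n jm.1 jm.2))) ^ r) ^ (1/r) := by
  rw [BMnorm, lrNorm, if_neg ENNReal.ofReal_ne_top, ENNReal.toReal_ofReal hr]
  rfl

theorem tsum_BMterm_ne_top_of_BMnorm_lt_top (hr : 0 < r) {f : (Fin n → ℝ) → X}
    (hf : BMnorm n p t (ENNReal.ofReal r) f < ∞) :
    ∑' jm : ℤ × (Fin n → ℤ), (cubeVol n jm.1 ^ (1/t - 1/p) *
      eLpNorm' f p (volume.restrict (dyadicCube n jm.1 jm.2))) ^ r ≠ ∞ := by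
  rw [BMnorm_ofReal_eq hr.le] at hf
  exact ((ENNReal.rpow_lt_top_iff_of_pos (one_div_pos.2 hr)).1 hf).ne

theorem eLpNorm'_restrict_dyadicCube_ne_top_of_BMnorm_lt_top (hr : 0 < r) {f : (Fin n → ℝ) → X}
    (hf : BMnorm n p t (ENNReal.ofReal r) f < ∞) (j : ℤ) (m : Fin n → ℤ) :
    eLpNorm' f p (volume.restrict (dyadicCube n j m)) ≠ ∞ := by
  have hterm := ne_top_of_le_ne_top (tsum_BMterm_ne_top_of_BMnorm_lt_top hr hf)
    (ENNReal.le_tsum (j, m))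
  rw [Ne, ENNReal.rpow_eq_top_iff_of_pos hr, ENNReal.mul_eq_top] at hterm
  simp_all [ENNReal.rpow_eq_zero_iff, cubeVol_ne_zero, cubeVol_ne_top]

def dyadicTruncation (S : Finset (ℤ × (Fin n → ℤ))) (M : ℝ) (f : (Fin n → ℝ) → X) :
    (Fin n → ℝ) → X :=
  ((⋃ jm ∈ S, dyadicCube n jm.1 jm.2) ∩ {x | ‖f x‖ ≤ M}).indicator f

variable {S : Finset (ℤ × (Fin n → ℤ))} {M : ℝ} {f : (Fin n → ℝ) → X}

theorem MeasureTheory.AEStronglyMeasurable.dyadicTruncation (hf : AEStronglyMeasurable f) :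
    AEStronglyMeasurable (dyadicTruncation S M f) :=
  hf.indicator₀ <| (S.measurableSet_biUnion fun jm _ =>
    measurableSet_dyadicCube jm.1 jm.2).nullMeasurableSet.inter
      (nullMeasurableSet_le hf.norm aestronglyMeasurable_const)

theorem norm_dyadicTruncation_le (hM : 0 ≤ M) (x : Fin n → ℝ) :
    ‖dyadicTruncation S M f x‖ ≤ M := by
  by_cases hx : x ∈ (⋃ jm ∈ S, dyadicCube n jm.1 jm.2) ∩ {x | ‖f x‖ ≤ M}
  · simpa [dyadicTruncation, Set.indicator_of_mem hx] using hx.2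
  · simpa [dyadicTruncation, Set.indicator_of_notMem hx] using hM

theorem hasCompactSupport_dyadicTruncation : HasCompactSupport (dyadicTruncation S M f) := by
  refine HasCompactSupport.intro (K := ⋃ jm ∈ S, Set.Icc (fun i => (2:ℝ) ^ (-(jm.1:ℝ)) * jm.2 i)
    (fun i => (2:ℝ) ^ (-(jm.1:ℝ)) * (jm.2 i + 1))) (S.isCompact_biUnion fun _ _ => isCompact_Icc)
    fun x hx => ?_
  refine Set.indicator_of_notMem (fun hx' => hx ?_) f
  obtain ⟨jm, hjm, hxQ⟩ := Set.mem_iUnion₂.1 hx'.1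
  exact Set.mem_iUnion₂.2 ⟨jm, hjm, dyadicCube_subset_Icc jm.1 jm.2 hxQ⟩

theorem norm_sub_dyadicTruncation_le (x : Fin n → ℝ) :
    ‖f x - dyadicTruncation S M f x‖ ≤ ‖f x‖ := by
  rw [dyadicTruncation, ← Pi.sub_apply, ← Set.indicator_compl]
  exact norm_indicator_le_norm_self f x

theorem sub_dyadicTruncation_eqOn {jm : ℤ × (Fin n → ℤ)} (hjm : jm ∈ S) :
    Set.EqOn (f - dyadicTruncation S M f) ({x | M < ‖f x‖}.indicator f)
      (dyadicCube n jm.1 jm.2) := by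
  intro x hx
  have hxS : x ∈ ⋃ jm ∈ S, dyadicCube n jm.1 jm.2 := Set.mem_iUnion₂.2 ⟨jm, hjm, hx⟩
  by_cases hM : ‖f x‖ ≤ M
  · simp [dyadicTruncation, hxS, hM]
  · simp [dyadicTruncation, hM, lt_of_not_ge hM]

theorem tendsto_eLpNorm'_sub_dyadicTruncation (hf : AEStronglyMeasurable f) (hp : 0 < p)
    {jm : ℤ × (Fin n → ℤ)} (hjm : jm ∈ S)
    (hfQ : eLpNorm' f p (volume.restrict (dyadicCube n jm.1 jm.2)) ≠ ∞) :
    Tendsto (fun M : ℕ => eLpNorm' (f - dyadicTruncation S M f) p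
      (volume.restrict (dyadicCube n jm.1 jm.2))) atTop (𝓝 0) := by
  refine (tendsto_eLpNorm'_indicator_lt_norm hf.restrict hp hfQ).congr fun M => ?_
  exact eLpNorm'_congr_ae ((ae_restrict_mem (measurableSet_dyadicCube jm.1 jm.2)).mono
    fun x hx => (sub_dyadicTruncation_eqOn hjm hx).symm)

end Dyadic

theorem Linfty_c_dense_in_BM_general (n : ℕ) (p t r : ℝ)
    {X : Type*} [NormedAddCommGroup X]
    (hp : 1 ≤ p) (hpt : p < t) (htr : t < r)
    (f : (Fin n → ℝ) → X) (hf : MemBM n p t (ENNReal.ofReal r) f)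
    (ε : ℝ≥0∞) (hε : 0 < ε) :
    ∃ g : (Fin n → ℝ) → X,
      AEStronglyMeasurable g volume ∧ (∃ M : ℝ, ∀ x, ‖g x‖ ≤ M) ∧
        HasCompactSupport g ∧
        BMnorm n p t (ENNReal.ofReal r) (fun x => f x - g x) < ε := by
  obtain ⟨hmeas, hnorm⟩ := hf
  have hp0 : 0 < p := by linarith
  have hr0 : 0 < r := by linarith
  set w : ℤ → ℝ≥0∞ := fun j => cubeVol n j ^ (1/t - 1/p)
  set Q : ℤ × (Fin n → ℤ) → Measure (Fin n → ℝ) := fun jm =>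
    volume.restrict (dyadicCube n jm.1 jm.2)
  obtain ⟨δ, hδ, hδε⟩ : ∃ δ > 0, ∀ y ∈ Set.Iio δ, y ^ (1/r) < ε := by
    have h := (ENNReal.continuous_rpow_const (y := 1/r)).tendsto 0
    rw [ENNReal.zero_rpow_of_pos (one_div_pos.2 hr0)] at h
    exact ENNReal.nhds_zero_basis.eventually_iff.1 (h.eventually (gt_mem_nhds hε))
  have hle : ∀ S (M : ℕ) jm, (w jm.1 * eLpNorm' (f - dyadicTruncation S M f) p (Q jm)) ^ r ≤
      (w jm.1 * eLpNorm' f p (Q jm)) ^ r := fun S M jm => by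
    gcongr
    exact eLpNorm'_mono_ae hp0.le (ae_of_all _ norm_sub_dyadicTruncation_le)
  have hlim : ∀ S, ∀ jm ∈ S, Tendsto (fun M : ℕ =>
      (w jm.1 * eLpNorm' (f - dyadicTruncation S M f) p (Q jm)) ^ r) atTop (𝓝 0) :=
    fun S jm hjm => ENNReal.Tendsto.const_mul_rpow_zero
      (tendsto_eLpNorm'_sub_dyadicTruncation hmeas hp0 hjm
        (eLpNorm'_restrict_dyadicCube_ne_top_of_BMnorm_lt_top hr0 hnorm jm.1 jm.2))
      (cubeVol_rpow_ne_top jm.1 _) hr0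
  obtain ⟨S, M, hSM⟩ := ENNReal.exists_tsum_lt_of_le_of_tendsto_zero
    (tsum_BMterm_ne_top_of_BMnorm_lt_top hr0 hnorm) _ hle hlim hδ
  refine ⟨dyadicTruncation S M f, hmeas.dyadicTruncation,
    ⟨M, norm_dyadicTruncation_le M.cast_nonneg⟩, hasCompactSupport_dyadicTruncation, ?_⟩
  rw [BMnorm_ofReal_eq hr0.le]
  exact hδε _ hSM

theorem Linfty_c_dense_in_BM (n : ℕ) (p t r : ℝ)
    {X : Type*} [NormedAddCommGroup X] [NormedSpace ℝ X] [CompleteSpace X]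
    (hp : 1 ≤ p) (hpt : p < t) (htr : t < r)
    (f : (Fin n → ℝ) → X) (hf : MemBM n p t (ENNReal.ofReal r) f)
    (ε : ℝ≥0∞) (hε : 0 < ε) :
    ∃ g : (Fin n → ℝ) → X,
      AEStronglyMeasurable g volume ∧ (∃ M : ℝ, ∀ x, ‖g x‖ ≤ M) ∧
        HasCompactSupport g ∧
        BMnorm n p t (ENNReal.ofReal r) (fun x => f x - g x) < ε :=
  Linfty_c_dense_in_BM_general n p t r hp hpt htr f hf ε hε

end
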